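/- For α ≠ 0, the Belobrov–Zaslavsky–Tartakovsky vector field satisfies q̇ = J(q)·∇H(q), where J(q) is the antisymmetric matrix (1/α)·[[0, z, -y, 0, 0], [-z, 0, x, 0, 0], [y, -x, 0, 0, 0], [0, 0, 0, 0, α], [0, 0, 0, -α, 0]] and H(q) = αz - αxE + (1/2)μ²E² + (1/2)B². -/
import Mathlib


/-- H = αz - αxE + (1/2)μ²E² + (1/2)B². -/
noncomputable def Hint (α μ : ℝ) : (Fin 5 → ℝ) → ℝ :=
  fun q => α * q 2 - α * q 0 * q 3 + (1/2) * μ ^ 2 * q 3 ^ 2 + (1/2) * q 4 ^ 2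

/-- The gradient of a function on ℝ⁵. -/
noncomputable def grad5 (f : (Fin 5 → ℝ) → ℝ) (q : Fin 5 → ℝ) : Fin 5 → ℝ :=
  fun i => fderiv ℝ f q (Pi.single i 1)

/-- The degenerate Poisson matrix J(q). -/
noncomputable def Jmat (α : ℝ) (q : Fin 5 → ℝ) : Matrix (Fin 5) (Fin 5) ℝ :=
  (1/α) • !![0, q 2, -q 1, 0, 0;
             -q 2, 0, q 0, 0, 0;
             q 1, -q 0, 0, 0, 0;
             0, 0, 0, 0, α;
             0, 0, 0, -α, 0]

open ContinuousLinearMap in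
lemma Hint_hasFDerivAt (α μ : ℝ) (q : Fin 5 → ℝ) :
    HasFDerivAt (Hint α μ)
      (α • (proj 2 : (Fin 5 → ℝ) →L[ℝ] ℝ)
        - (α • ((q 0 • (proj 3 : (Fin 5 → ℝ) →L[ℝ] ℝ)) + (q 3 • (proj 0 : (Fin 5 → ℝ) →L[ℝ] ℝ))))
        + ((1/2) * μ ^ 2) • (q 3 • (proj 3 : (Fin 5 → ℝ) →L[ℝ] ℝ) + q 3 • (proj 3 : (Fin 5 → ℝ) →L[ℝ] ℝ))
        + (1/2 : ℝ) • (q 4 • (proj 4 : (Fin 5 → ℝ) →L[ℝ] ℝ) + q 4 • (proj 4 : (Fin 5 → ℝ) →L[ℝ] ℝ))) q := by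
  have h : ∀ i : Fin 5, HasFDerivAt (fun q : Fin 5 → ℝ => q i)
      (proj i : (Fin 5 → ℝ) →L[ℝ] ℝ) q := fun i => hasFDerivAt_apply i q
  have hH : Hint α μ = fun q : Fin 5 → ℝ =>
      α * q 2 - α * (q 0 * q 3) + (1/2) * μ ^ 2 * (q 3 * q 3) + (1/2) * (q 4 * q 4) := by
    funext q; simp [Hint]; ring
  rw [hH]
  exact ((((h 2).const_mul α).sub (((h 0).mul (h 3)).const_mul α)).add
    (((h 3).mul (h 3)).const_mul ((1/2) * μ ^ 2))).add (((h 4).mul (h 4)).const_mul (1/2))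

lemma grad5_Hint (α μ : ℝ) (q : Fin 5 → ℝ) :
    grad5 (Hint α μ) q = ![-(α * q 3), 0, α, -(α * q 0) + μ ^ 2 * q 3, q 4] := by
  funext i
  have h := (Hint_hasFDerivAt α μ q).fderiv
  simp only [grad5, h]
  fin_cases i <;>
    simp [ContinuousLinearMap.proj, Pi.single_apply] <;> ring

theorem Belobrov_is_Hamiltonian (α μ : ℝ) (hα : α ≠ 0) (q : Fin 5 → ℝ) :
    (Jmat α q).mulVec (grad5 (Hint α μ) q) =
      ![-q 1, q 0 + q 2 * q 3, -q 1 * q 3, q 4, α * q 0 - μ ^ 2 * q 3] := by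
  rw [grad5_Hint]
  funext i
  fin_cases i <;>
    simp [Jmat, Matrix.mulVec, dotProduct, Fin.sum_univ_five] <;>
    field_simp <;> ring
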